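/- Let f(s) = f₀ + a s^k with f₀, a > 0, k ≥ 1, and g(s) = b s^j with b > 0, j > −1, on (0,1]. If k = 2(j+1), then there exist constants C > 0 and α > 0 such that the separation integral L(s0) near the turning point satisfies L(s0) ≥ −C log(s0) for all sufficiently small s0 > 0; in particular L(s0) → ∞ as s0 → 0⁺. -/

import Mathlib

/-!
Write `F(s) = f₀ + a s^k`, so that `F(s)² - F(s0)² = a (s^k - s0^k) (F(s) + F(s0))`.
On `(s0, 1]` this is at most `2a(f₀ + a) s^k = 2a(f₀ + a) s^(2(j+1))`; in the marginal case the
square root is then `O(s^(j+1))`, and the integrand of `L(s0)` dominates `c / s`, whose integral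
over `[s0, 1]` is `-c log s0`. It is also at least `2 a f₀ s0^(k-1) (s - s0)`, so the integrand
has only an inverse square root singularity at `s0`: it is integrable, and the comparison is
legitimate.
-/

open MeasureTheory Set Filter Real

noncomputable def separationIntegrand (f g : ℝ → ℝ) (s0 s : ℝ) : ℝ :=
  g s / f s * (f s0 / √(f s ^ 2 - f s0 ^ 2))

lemma intervalIntegrable_sub_rpow_neg_half (s0 t : ℝ) :
    IntervalIntegrable (fun s => (s - s0) ^ (-(1 / 2) : ℝ)) volume s0 t := by
  simpa using (intervalIntegral.intervalIntegrable_rpow' (r := -(1 / 2)) (by norm_num)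
    (a := 0) (b := t - s0)).comp_sub_right s0

lemma intervalIntegrable_separationIntegrand {f g : ℝ → ℝ} {s0 t m : ℝ} (hst : s0 ≤ t)
    (hf : ContinuousOn f (Icc s0 t)) (hg : ContinuousOn g (Icc s0 t))
    (hf_ne : ∀ s ∈ Icc s0 t, f s ≠ 0) (hm : 0 < m)
    (hgap : ∀ s ∈ Ioc s0 t, m * (s - s0) ≤ f s ^ 2 - f s0 ^ 2) :
    IntervalIntegrable (separationIntegrand f g s0) volume s0 t := by
  set φ := fun s => g s / f s * f s0
  have hφ : ContinuousOn φ (Icc s0 t) :=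
    (hg.div hf hf_ne).mul continuousOn_const
  obtain ⟨B, hB⟩ := isCompact_Icc.exists_bound_of_continuousOn hφ
  have hgap_pos : ∀ s ∈ Ioc s0 t, 0 < f s ^ 2 - f s0 ^ 2 := fun s hs =>
    (mul_pos hm (sub_pos.2 hs.1)).trans_le (hgap s hs)
  have hform : separationIntegrand f g s0 = fun s => φ s / √(f s ^ 2 - f s0 ^ 2) :=
    funext fun s => (mul_div_assoc _ _ _).symm
  have hcont : ContinuousOn (fun s => φ s / √(f s ^ 2 - f s0 ^ 2)) (Ioc s0 t) :=
    (hφ.mono Ioc_subset_Icc_self).div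
      ((hf.mono Ioc_subset_Icc_self).pow 2 |>.sub continuousOn_const).sqrt
      fun s hs => (sqrt_pos.2 (hgap_pos s hs)).ne'
  rw [hform, intervalIntegrable_iff_integrableOn_Ioc_of_le hst]
  refine Integrable.mono' ((intervalIntegrable_iff_integrableOn_Ioc_of_le hst).1
    ((intervalIntegrable_sub_rpow_neg_half s0 t).const_mul (B / √m)))
    (hcont.aestronglyMeasurable measurableSet_Ioc) ?_
  filter_upwards [ae_restrict_mem measurableSet_Ioc] with s hs
  have hsub : 0 < s - s0 := sub_pos.2 hs.1
  have hBs := hB s (Ioc_subset_Icc_self hs)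
  calc ‖φ s / √(f s ^ 2 - f s0 ^ 2)‖ = ‖φ s‖ / √(f s ^ 2 - f s0 ^ 2) := by
        rw [norm_div, Real.norm_of_nonneg (sqrt_nonneg _)]
    _ ≤ B / √(m * (s - s0)) :=
        div_le_div₀ ((norm_nonneg _).trans hBs) hBs (by positivity)
          (sqrt_le_sqrt (hgap s hs))
    _ = B / √m * (s - s0) ^ (-(1 / 2) : ℝ) := by
        rw [sqrt_mul hm.le, rpow_neg hsub.le, ← sqrt_eq_rpow, div_mul_eq_div_div,
          div_eq_mul_inv _ (√(s - s0))]

lemma mul_log_div_le_integral_of_div_le {h : ℝ → ℝ} {c s0 t : ℝ} (hs0 : 0 < s0) (hst : s0 ≤ t)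
    (hh : IntervalIntegrable h volume s0 t) (hle : ∀ s ∈ Ioo s0 t, c / s ≤ h s) :
    c * log (t / s0) ≤ ∫ s in s0..t, h s := by
  have hinv : IntervalIntegrable (fun s => c / s) volume s0 t :=
    (continuousOn_const.div continuousOn_id fun s hs =>
      (hs0.trans_le (uIcc_of_le hst ▸ hs).1).ne').intervalIntegrable
  calc c * log (t / s0) = ∫ s in s0..t, c / s := by
        simp only [div_eq_mul_inv c, intervalIntegral.integral_const_mul,
          integral_inv_of_pos hs0 (hs0.trans_le hst)]
    _ ≤ ∫ s in s0..t, h s := intervalIntegral.integral_mono_on_of_le_Ioo hst hinv hh hle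

lemma powerLaw_sq_sub_sq (f₀ a x y : ℝ) :
    (f₀ + a * x) ^ 2 - (f₀ + a * y) ^ 2 = a * (x - y) * ((f₀ + a * x) + (f₀ + a * y)) := by
  ring

lemma rpow_pred_mul_sub_le_rpow_sub_rpow {k s0 s : ℝ} (hk : 1 ≤ k) (hs0 : 0 < s0) (hs : s0 ≤ s) :
    s0 ^ (k - 1) * (s - s0) ≤ s ^ k - s0 ^ k := by
  have hmono : s0 ^ (k - 1) ≤ s ^ (k - 1) := rpow_le_rpow hs0.le hs (by linarith)
  have hsplit : ∀ x : ℝ, 0 < x → x ^ k = x ^ (k - 1) * x := fun x hx => by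
    rw [← rpow_add_one hx.ne', sub_add_cancel]
  rw [hsplit s (hs0.trans_le hs), hsplit s0 hs0]
  nlinarith [mul_le_mul_of_nonneg_right hmono (hs0.trans_le hs).le]

lemma mul_sub_le_powerLaw_sq_sub_sq {f₀ a k s0 s : ℝ} (hf₀ : 0 ≤ f₀) (ha : 0 ≤ a) (hk : 1 ≤ k)
    (hs0 : 0 < s0) (hs : s0 ≤ s) :
    2 * a * f₀ * s0 ^ (k - 1) * (s - s0) ≤ (f₀ + a * s ^ k) ^ 2 - (f₀ + a * s0 ^ k) ^ 2 := by
  have hgap := rpow_pred_mul_sub_le_rpow_sub_rpow hk hs0 hs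
  have hgap_nonneg : 0 ≤ s0 ^ (k - 1) * (s - s0) := by
    have := rpow_pos_of_pos hs0 (k - 1); nlinarith
  have hsum : 2 * f₀ ≤ (f₀ + a * s ^ k) + (f₀ + a * s0 ^ k) := by
    have := rpow_nonneg (hs0.trans_le hs).le k
    have := rpow_nonneg hs0.le k
    nlinarith
  rw [powerLaw_sq_sub_sq]
  calc 2 * a * f₀ * s0 ^ (k - 1) * (s - s0) = a * (s0 ^ (k - 1) * (s - s0)) * (2 * f₀) := by ring
    _ ≤ a * (s ^ k - s0 ^ k) * ((f₀ + a * s ^ k) + (f₀ + a * s0 ^ k)) :=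
      mul_le_mul (mul_le_mul_of_nonneg_left hgap ha) hsum (by positivity)
        (mul_nonneg ha (hgap_nonneg.trans hgap))

lemma powerLaw_sq_sub_sq_le {f₀ a k s0 s : ℝ} (hf₀ : 0 ≤ f₀) (ha : 0 ≤ a) (hk : 0 ≤ k)
    (hs0 : 0 ≤ s0) (hs : s0 ≤ s) (hs1 : s ≤ 1) :
    (f₀ + a * s ^ k) ^ 2 - (f₀ + a * s0 ^ k) ^ 2 ≤ 2 * a * (f₀ + a) * s ^ k := by
  have hs0k : 0 ≤ s0 ^ k := rpow_nonneg hs0 k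
  have hmono : s0 ^ k ≤ s ^ k := rpow_le_rpow hs0 hs hk
  have hsk : s ^ k ≤ 1 := rpow_le_one (hs0.trans hs) hs1 hk
  have hsum : (f₀ + a * s ^ k) + (f₀ + a * s0 ^ k) ≤ 2 * (f₀ + a) := by nlinarith
  rw [powerLaw_sq_sub_sq]
  calc a * (s ^ k - s0 ^ k) * ((f₀ + a * s ^ k) + (f₀ + a * s0 ^ k))
      ≤ a * s ^ k * (2 * (f₀ + a)) :=
        mul_le_mul (by nlinarith) hsum (by nlinarith [mul_nonneg ha hs0k])
          (mul_nonneg ha (hs0k.trans hmono))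
    _ = 2 * a * (f₀ + a) * s ^ k := by ring

lemma div_le_separationIntegrand_powerLaw {f₀ a b k j s0 s : ℝ} (hf₀ : 0 < f₀) (ha : 0 < a)
    (hb : 0 ≤ b) (hj : -1 < j) (hkj : k = 2 * (j + 1)) (hs0 : 0 < s0) (hs : s0 < s)
    (hs1 : s ≤ 1) :
    b * f₀ / ((f₀ + a) * √(2 * a * (f₀ + a))) / s ≤
      separationIntegrand (fun s => f₀ + a * s ^ k) (fun s => b * s ^ j) s0 s := by
  have hk : 0 < k := by linarith
  have hs_pos : 0 < s := hs0.trans hs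
  set F := f₀ + a * s ^ k
  set F0 := f₀ + a * s0 ^ k
  have hD : 0 < F ^ 2 - F0 ^ 2 := by
    rw [powerLaw_sq_sub_sq]
    have := rpow_lt_rpow hs0.le hs hk
    have := rpow_pos_of_pos hs0 k
    have := rpow_pos_of_pos hs_pos k
    exact mul_pos (mul_pos ha (by linarith)) (by positivity)
  have hsqrt : √(F ^ 2 - F0 ^ 2) ≤ √(2 * a * (f₀ + a)) * s ^ (j + 1) := by
    have hhalf : √(s ^ k) = s ^ (j + 1) := by
      rw [sqrt_eq_rpow, ← rpow_mul hs_pos.le, hkj]; ring_nf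
    rw [← hhalf, ← sqrt_mul (by positivity)]
    exact sqrt_le_sqrt (powerLaw_sq_sub_sq_le hf₀.le ha.le hk.le hs0.le hs.le hs1)
  have hF_le : F ≤ f₀ + a := by
    have := rpow_le_one hs_pos.le hs1 hk.le; nlinarith
  have hF0_ge : f₀ ≤ F0 := by
    have := rpow_pos_of_pos hs0 k; nlinarith
  have hsj := rpow_pos_of_pos hs_pos j
  calc b * f₀ / ((f₀ + a) * √(2 * a * (f₀ + a))) / s
      = b * s ^ j * f₀ / ((f₀ + a) * (√(2 * a * (f₀ + a)) * s ^ (j + 1))) := by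
        rw [rpow_add_one hs_pos.ne']; field_simp
    _ ≤ b * s ^ j * F0 / (F * √(F ^ 2 - F0 ^ 2)) :=
        div_le_div₀ (by positivity) (mul_le_mul_of_nonneg_left hF0_ge (by positivity))
          (by positivity) (mul_le_mul hF_le hsqrt (sqrt_nonneg _) (by positivity))
    _ = _ := div_mul_div_comm _ _ _ _ |>.symm

lemma neg_mul_log_le_integral_separationIntegrand_powerLaw {f₀ a b k j s0 : ℝ} (hf₀ : 0 < f₀)
    (ha : 0 < a) (hb : 0 ≤ b) (hk : 1 ≤ k) (hkj : k = 2 * (j + 1)) (hs0 : 0 < s0)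
    (hs1 : s0 ≤ 1) :
    -(b * f₀ / ((f₀ + a) * √(2 * a * (f₀ + a)))) * log s0 ≤
      ∫ s in s0..1, separationIntegrand (fun s => f₀ + a * s ^ k) (fun s => b * s ^ j) s0 s := by
  have hrpow : ∀ p : ℝ, ContinuousOn (fun s : ℝ => s ^ p) (Icc s0 1) := fun p =>
    continuousOn_id.rpow_const fun s hs => Or.inl (hs0.trans_le hs.1).ne'
  have hint : IntervalIntegrable
      (separationIntegrand (fun s => f₀ + a * s ^ k) (fun s => b * s ^ j) s0) volume s0 1 :=
    intervalIntegrable_separationIntegrand hs1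
      (continuousOn_const.add (continuousOn_const.mul (hrpow k)))
      (continuousOn_const.mul (hrpow j))
      (fun s hs => (add_pos_of_pos_of_nonneg hf₀
        (mul_nonneg ha.le (rpow_nonneg (hs0.trans_le hs.1).le k))).ne')
      (by have := rpow_pos_of_pos hs0 (k - 1); positivity : 0 < 2 * a * f₀ * s0 ^ (k - 1))
      fun s hs => mul_sub_le_powerLaw_sq_sub_sq hf₀.le ha.le hk hs0 hs.1.le
  have := mul_log_div_le_integral_of_div_le hs0 hs1 hint fun s hs =>
    div_le_separationIntegrand_powerLaw hf₀ ha hb (by linarith) hkj hs0 hs.1 hs.2.le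
  rwa [one_div, log_inv, mul_neg, ← neg_mul] at this

theorem separation_log_divergence_general
    (f₀ a b k j : ℝ) (hf₀ : 0 < f₀) (ha : 0 < a) (hk : 1 ≤ k)
    (hb : 0 < b) (hkj : k = 2 * (j + 1)) :
    (∃ C > (0:ℝ), ∀ᶠ s0 in nhdsWithin 0 (Ioi 0),
      2 * (∫ s in s0..1, (b * s ^ j / (f₀ + a * s ^ k)) *
        ((f₀ + a * s0 ^ k) /
          Real.sqrt ((f₀ + a * s ^ k) ^ 2 - (f₀ + a * s0 ^ k) ^ 2)))
        ≥ -C * Real.log s0)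
    ∧ Tendsto
      (fun s0 => 2 * ∫ s in s0..1, (b * s ^ j / (f₀ + a * s ^ k)) *
        ((f₀ + a * s0 ^ k) /
          Real.sqrt ((f₀ + a * s ^ k) ^ 2 - (f₀ + a * s0 ^ k) ^ 2)))
      (nhdsWithin 0 (Ioi 0)) atTop := by
  set c := b * f₀ / ((f₀ + a) * √(2 * a * (f₀ + a)))
  have hc : 0 < c := by have := sqrt_pos.2 (by positivity : 0 < 2 * a * (f₀ + a)); positivity
  have hlog : ∀ᶠ s0 in nhdsWithin 0 (Ioi 0),
      2 * (∫ s in s0..1, (b * s ^ j / (f₀ + a * s ^ k)) *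
        ((f₀ + a * s0 ^ k) / √((f₀ + a * s ^ k) ^ 2 - (f₀ + a * s0 ^ k) ^ 2)))
        ≥ -(2 * c) * log s0 := by
    filter_upwards [Ioo_mem_nhdsGT one_pos] with s0 hs0
    have := neg_mul_log_le_integral_separationIntegrand_powerLaw hf₀ ha hb.le hk hkj hs0.1 hs0.2.le
    simp only [separationIntegrand] at this
    linarith
  refine ⟨⟨2 * c, by positivity, hlog⟩, tendsto_atTop_mono' _ hlog ?_⟩
  exact tendsto_log_nhdsGT_zero.const_mul_atBot_of_neg (by linarith)

/-- Marginal case `k = 2(j+1)`: for `f(s) = f₀ + a s^k`, `g(s) = b s^j`, the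
near-turning-point separation integral diverges at least logarithmically as
`s0 → 0⁺`; in particular it tends to infinity. -/
theorem separation_log_divergence
    (f₀ a b k j : ℝ) (hf₀ : 0 < f₀) (ha : 0 < a) (hk : 1 ≤ k)
    (hb : 0 < b) (hj : -1 < j) (hkj : k = 2 * (j + 1)) :
    (∃ C > (0:ℝ), ∀ᶠ s0 in nhdsWithin 0 (Ioi 0),
      2 * (∫ s in s0..1, (b * s ^ j / (f₀ + a * s ^ k)) *
        ((f₀ + a * s0 ^ k) /
          Real.sqrt ((f₀ + a * s ^ k) ^ 2 - (f₀ + a * s0 ^ k) ^ 2)))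
        ≥ -C * Real.log s0)
    ∧ Tendsto
      (fun s0 => 2 * ∫ s in s0..1, (b * s ^ j / (f₀ + a * s ^ k)) *
        ((f₀ + a * s0 ^ k) /
          Real.sqrt ((f₀ + a * s ^ k) ^ 2 - (f₀ + a * s0 ^ k) ^ 2)))
      (nhdsWithin 0 (Ioi 0)) atTop :=
  separation_log_divergence_general f₀ a b k j hf₀ ha hk hb hkj
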